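/- arXiv:2301.03906 — 4 statements merged into one kernel-verified Lean document; each statement's English description precedes it below -/
import Mathlib

section
/- Let A, B, C be 3×3 complex matrices of determinant 1 with CBA = I. Then tr(A⁻¹B) − tr(A⁻¹)tr(B) = tr(C⁻¹A) − tr(C⁻¹)tr(A) and tr(A⁻¹B) − tr(A⁻¹)tr(B) = tr(B⁻¹C) − tr(B⁻¹)tr(C). -/
/-!
Cayley–Hamilton in dimension 3 gives `adj X = X² - tr X • X + tr (adj X) • 1`, hence for `det X = 1`
`tr (X⁻¹ Y) - tr X⁻¹ tr Y = tr (X² Y) - tr X tr (X Y)`.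
If `C B A = 1` then `A⁻¹ = C B`, so the invariant of `(A, B)` is `tr (C B²) - tr (C B) tr B`, which by
the identity above is the invariant of `(B, C)`. The relation `C B A = 1` is invariant under cyclic
permutation of `(A, B, C)`, which gives the remaining equality.
-/

open Matrix

namespace Matrix

variable {R : Type*} [CommRing R]

theorem adjugate_fin_three_eq_cayleyHamilton (X : Matrix (Fin 3) (Fin 3) R) :
    X.adjugate = X * X - X.trace • X + X.adjugate.trace • 1 := by
  ext i j
  fin_cases i <;> fin_cases j <;>
    simp [adjugate_fin_three, trace_fin_three, mul_apply, Fin.sum_univ_three] <;> ring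

theorem trace_adjugate_mul_sub_fin_three (X Y : Matrix (Fin 3) (Fin 3) R) :
    (X.adjugate * Y).trace - X.adjugate.trace * Y.trace
      = (X * X * Y).trace - X.trace * (X * Y).trace := by
  nth_rewrite 1 [adjugate_fin_three_eq_cayleyHamilton X]
  simp only [add_mul, sub_mul, smul_mul, one_mul, trace_add, trace_sub, trace_smul, smul_eq_mul]
  ring

theorem inv_eq_adjugate_of_det_eq_one {n : Type*} [Fintype n] [DecidableEq n]
    {X : Matrix n n R} (hX : X.det = 1) : X⁻¹ = X.adjugate := by
  simp [inv_def, hX]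

end Matrix

noncomputable def shapeInvariant {R n : Type*} [CommRing R] [Fintype n] [DecidableEq n]
    (A B : Matrix n n R) : R :=
  (A⁻¹ * B).trace - (A⁻¹).trace * B.trace

theorem shapeInvariant_eq_of_mul_mul_eq_one {R : Type*} [CommRing R]
    {A B C : Matrix (Fin 3) (Fin 3) R} (hB : B.det = 1) (h : C * B * A = 1) :
    shapeInvariant A B = shapeInvariant B C := by
  have hAinv : A⁻¹ = C * B := inv_eq_left_inv h
  have hBC := trace_adjugate_mul_sub_fin_three B C
  rw [← inv_eq_adjugate_of_det_eq_one hB] at hBC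
  rw [shapeInvariant, shapeInvariant, hBC, hAinv, mul_assoc, trace_mul_comm C, trace_mul_comm C,
    mul_comm]

theorem mul_mul_eq_one_rotate {R n : Type*} [CommRing R] [Fintype n] [DecidableEq n]
    {A B C : Matrix n n R} (h : C * B * A = 1) : A * C * B = 1 := by
  rw [mul_assoc, mul_eq_one_comm, h]

theorem shape_invariant_sigma_plus_cyclic_general
    (A B C : Matrix (Fin 3) (Fin 3) ℂ)
    (hB : B.det = 1) (hC : C.det = 1)
    (h : C * B * A = 1) :
    (A⁻¹ * B).trace - (A⁻¹).trace * B.trace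
      = (C⁻¹ * A).trace - (C⁻¹).trace * A.trace ∧
    (A⁻¹ * B).trace - (A⁻¹).trace * B.trace
      = (B⁻¹ * C).trace - (B⁻¹).trace * C.trace := by
  have hAB : shapeInvariant A B = shapeInvariant B C := shapeInvariant_eq_of_mul_mul_eq_one hB h
  have hBC : shapeInvariant B C = shapeInvariant C A :=
    shapeInvariant_eq_of_mul_mul_eq_one hC (mul_mul_eq_one_rotate h)
  exact ⟨hAB.trans hBC, hAB⟩

theorem shape_invariant_sigma_plus_cyclic
    (A B C : Matrix (Fin 3) (Fin 3) ℂ)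
    (hA : A.det = 1) (hB : B.det = 1) (hC : C.det = 1)
    (h : C * B * A = 1) :
    (A⁻¹ * B).trace - (A⁻¹).trace * B.trace
      = (C⁻¹ * A).trace - (C⁻¹).trace * A.trace ∧
    (A⁻¹ * B).trace - (A⁻¹).trace * B.trace
      = (B⁻¹ * C).trace - (B⁻¹).trace * C.trace :=
  shape_invariant_sigma_plus_cyclic_general A B C hB hC h
end

section
/- Let A, B, C be 3×3 complex matrices of determinant 1 with CBA = I. Then tr(AB⁻¹) − tr(B⁻¹)tr(A) = tr(CA⁻¹) − tr(A⁻¹)tr(C) and tr(AB⁻¹) − tr(B⁻¹)tr(A) = tr(BC⁻¹) − tr(C⁻¹)tr(B). -/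
/-!
For `M` of determinant one, Cayley–Hamilton gives `M⁻¹ = M² - tr M • M + σ₂ • 1` with
`σ₂ = tr M⁻¹`, so the scalar terms cancel in `tr (N M⁻¹) - tr M⁻¹ * tr N`, which becomes
`tr (N M²) - tr M * tr (N M)`. With `B⁻¹ = A C` both sides of `tr (A B⁻¹) - tr B⁻¹ * tr A =
tr (C A⁻¹) - tr A⁻¹ * tr C` then reduce to `tr (A A C) - tr A * tr (A C)` by cyclicity of the
trace. The relation `C B A = 1` is invariant under cyclic permutation of `(A, B, C)`, which
yields the second equality from the first.
-/

open Matrix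

variable {R : Type*} [CommRing R]

theorem Matrix.trace_mul_adjugate_sub_fin_three (M N : Matrix (Fin 3) (Fin 3) R) :
    (N * M.adjugate).trace - M.adjugate.trace * N.trace
      = (N * M * M).trace - M.trace * (N * M).trace := by
  rw [adjugate_fin_three M]
  simp only [trace, Fin.isValue, diag_apply, mul_apply, of_apply, cons_val', cons_val_fin_one,
    Fin.sum_univ_three, cons_val_zero, cons_val_one, cons_val]
  ring

theorem Matrix.trace_mul_inv_sub_fin_three {M : Matrix (Fin 3) (Fin 3) R} (hM : M.det = 1)
    (N : Matrix (Fin 3) (Fin 3) R) :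
    (N * M⁻¹).trace - (M⁻¹).trace * N.trace
      = (N * M * M).trace - M.trace * (N * M).trace := by
  rw [inv_def, hM, Ring.inverse_one, one_smul]
  exact trace_mul_adjugate_sub_fin_three M N

theorem trace_mul_inv_sub_eq_of_mul_mul_eq_one {A B C : Matrix (Fin 3) (Fin 3) R}
    (hA : A.det = 1) (h : B * A * C = 1) :
    (A * B⁻¹).trace - (B⁻¹).trace * A.trace
      = (C * A⁻¹).trace - (A⁻¹).trace * C.trace := by
  have hBinv : B⁻¹ = A * C := inv_eq_right_inv (by rw [← Matrix.mul_assoc, h])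
  rw [trace_mul_inv_sub_fin_three hA, hBinv, trace_mul_comm C A, ← Matrix.mul_assoc,
    trace_mul_cycle, mul_comm]

theorem shape_invariant_sigma_minus_cyclic_general
    (A B C : Matrix (Fin 3) (Fin 3) ℂ)
    (hA : A.det = 1) (hC : C.det = 1)
    (h : C * B * A = 1) :
    (A * B⁻¹).trace - (B⁻¹).trace * A.trace
      = (C * A⁻¹).trace - (A⁻¹).trace * C.trace ∧
    (A * B⁻¹).trace - (B⁻¹).trace * A.trace
      = (B * C⁻¹).trace - (C⁻¹).trace * B.trace := by
  have hBAC : B * A * C = 1 := mul_eq_one_comm.1 (by rw [← Matrix.mul_assoc, h])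
  have hACB : A * C * B = 1 := mul_eq_one_comm.1 (by rw [← Matrix.mul_assoc, hBAC])
  have hAB := trace_mul_inv_sub_eq_of_mul_mul_eq_one hA hBAC
  exact ⟨hAB, hAB.trans (trace_mul_inv_sub_eq_of_mul_mul_eq_one hC hACB)⟩

theorem shape_invariant_sigma_minus_cyclic
    (A B C : Matrix (Fin 3) (Fin 3) ℂ)
    (hA : A.det = 1) (hB : B.det = 1) (hC : C.det = 1)
    (h : C * B * A = 1) :
    (A * B⁻¹).trace - (B⁻¹).trace * A.trace
      = (C * A⁻¹).trace - (A⁻¹).trace * C.trace ∧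
    (A * B⁻¹).trace - (B⁻¹).trace * A.trace
      = (B * C⁻¹).trace - (C⁻¹).trace * B.trace :=
  shape_invariant_sigma_minus_cyclic_general A B C hA hC h
end

section
/- Let A, B, C be in SL(3,ℂ) with CBA = I. Then tr([A,B]) + tr([B,A]) = tr(A)tr(A⁻¹) + tr(B)tr(B⁻¹) + tr(C)tr(C⁻¹) + σ₊(A,B,C)·σ₋(A,B,C) − tr(A)tr(B)tr(C) − tr(A⁻¹)tr(B⁻¹)tr(C⁻¹) − 3. -/
/-!
On `SL(3)` the inverse of a matrix is its adjugate, and `CBA = 1` gives `C⁻¹ = BA` and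
`C = adj(BA)`. After these substitutions both sides are polynomials in the entries of `A` and `B`;
homogenising with `det A` and `det B` turns the formula into a polynomial identity valid for all
`3 × 3` matrices over any commutative ring, which is checked by expansion.
-/

open Matrix

theorem Matrix.inv_eq_adjugate_of_det_eq_one_s5 {n R : Type*} [Fintype n] [DecidableEq n]
    [CommRing R] {A : Matrix n n R} (hA : A.det = 1) : A⁻¹ = A.adjugate := by
  rw [inv_def, hA, Ring.inverse_one, one_smul]

theorem Matrix.trace_adjugate_commutator_add_fin_three {R : Type*} [CommRing R]
    (A B : Matrix (Fin 3) (Fin 3) R) :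
    (A * B * A.adjugate * B.adjugate).trace + (B * A * B.adjugate * A.adjugate).trace
      = B.det * (A.trace * A.adjugate.trace) + A.det * (B.trace * B.adjugate.trace)
        + (B * A).adjugate.trace * (B * A).trace
        + ((A.adjugate * B).trace - A.adjugate.trace * B.trace)
          * ((B.adjugate * A).trace - B.adjugate.trace * A.trace)
        - A.trace * B.trace * (B * A).adjugate.trace
        - A.adjugate.trace * B.adjugate.trace * (B * A).trace - 3 * (A.det * B.det) := by
  simp only [trace_fin_three, adjugate_fin_three, det_fin_three, mul_apply, Fin.sum_univ_three,
    of_apply, cons_val', cons_val_zero, cons_val_one, cons_val_two, empty_val', cons_val_fin_one,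
    head_cons, tail_cons, head_fin_const]
  ring

theorem trace_commutator_sum_formula_general
    (A B C : Matrix (Fin 3) (Fin 3) ℂ)
    (hA : A.det = 1) (hB : B.det = 1)
    (h : C * B * A = 1) :
    (A * B * A⁻¹ * B⁻¹).trace + (B * A * B⁻¹ * A⁻¹).trace
      = A.trace * (A⁻¹).trace + B.trace * (B⁻¹).trace + C.trace * (C⁻¹).trace
        + ((A⁻¹ * B).trace - (A⁻¹).trace * B.trace)
          * ((B⁻¹ * A).trace - (B⁻¹).trace * A.trace)
        - A.trace * B.trace * C.trace
        - (A⁻¹).trace * (B⁻¹).trace * (C⁻¹).trace - 3 := by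
  have hCBA : C * (B * A) = 1 := by rw [← mul_assoc, h]
  have hBA : (B * A).det = 1 := by rw [det_mul, hA, hB, one_mul]
  have hC : C = (B * A).adjugate := by
    rw [← inv_eq_adjugate_of_det_eq_one_s5 hBA, inv_eq_left_inv hCBA]
  rw [inv_eq_right_inv hCBA, hC, inv_eq_adjugate_of_det_eq_one_s5 hA,
    inv_eq_adjugate_of_det_eq_one_s5 hB, trace_adjugate_commutator_add_fin_three, hA, hB]
  ring

theorem trace_commutator_sum_formula
    (A B C : Matrix (Fin 3) (Fin 3) ℂ)
    (hA : A.det = 1) (hB : B.det = 1) (hC : C.det = 1)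
    (h : C * B * A = 1) :
    (A * B * A⁻¹ * B⁻¹).trace + (B * A * B⁻¹ * A⁻¹).trace
      = A.trace * (A⁻¹).trace + B.trace * (B⁻¹).trace + C.trace * (C⁻¹).trace
        + ((A⁻¹ * B).trace - (A⁻¹).trace * B.trace)
          * ((B⁻¹ * A).trace - (B⁻¹).trace * A.trace)
        - A.trace * B.trace * C.trace
        - (A⁻¹).trace * (B⁻¹).trace * (C⁻¹).trace - 3 :=
  trace_commutator_sum_formula_general A B C hA hB h
end

section
/- Let Â, B̂ be in SL(2,ℂ) and set A = Φ*(Â), B = Φ*(B̂) and C = (BA)⁻¹ in SL(3,ℂ). Then σ₊(A,B,C) = tr(A) + tr(B) + tr(C) + 1 − 2·tr(Â)·tr(B̂)·tr(ÂB̂). -/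
/-!
`PhiStar` is multiplicative and `tr (PhiStar M) = (tr M)² - det M`, so on `SL(2,ℂ)` every trace
occurring in `σ₊` is a polynomial in traces of `2 × 2` matrices. The trace identity
`tr (Â⁻¹ B̂) = tr Â · tr B̂ - tr (Â B̂)` then turns the claim into a polynomial identity in
`tr Â`, `tr B̂` and `tr (Â B̂)`.
-/

open Matrix

/-- The irreducible representation of `SL(2,ℂ)` on `ℂ³` at the level of matrices. -/
noncomputable def PhiStar (M : Matrix (Fin 2) (Fin 2) ℂ) : Matrix (Fin 3) (Fin 3) ℂ :=
  !![(M 0 0) ^ 2, -(Real.sqrt 2 : ℂ) * M 0 0 * M 0 1, -(M 0 1) ^ 2;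
     -(Real.sqrt 2 : ℂ) * M 0 0 * M 1 0, M 0 0 * M 1 1 + M 0 1 * M 1 0,
       (Real.sqrt 2 : ℂ) * M 0 1 * M 1 1;
     -(M 1 0) ^ 2, (Real.sqrt 2 : ℂ) * M 1 0 * M 1 1, (M 1 1) ^ 2]

lemma ofReal_sqrt_two_sq : ((Real.sqrt 2 : ℝ) : ℂ) ^ 2 = 2 := by
  rw [← Complex.ofReal_pow, Real.sq_sqrt zero_le_two]
  norm_num

lemma phiStar_mul (M N : Matrix (Fin 2) (Fin 2) ℂ) :
    PhiStar (M * N) = PhiStar M * PhiStar N := by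
  ext i j
  fin_cases i <;> fin_cases j <;>
    simp [PhiStar, mul_apply, Fin.sum_univ_three, Fin.sum_univ_two] <;>
    ring_nf <;> simp only [ofReal_sqrt_two_sq]

lemma phiStar_one : PhiStar 1 = 1 := by
  ext i j
  fin_cases i <;> fin_cases j <;> simp [PhiStar]

lemma trace_phiStar (M : Matrix (Fin 2) (Fin 2) ℂ) :
    (PhiStar M).trace = M.trace ^ 2 - M.det := by
  simp [PhiStar, trace_fin_three, trace_fin_two, det_fin_two]
  ring

lemma inv_phiStar {M : Matrix (Fin 2) (Fin 2) ℂ} (hM : IsUnit M.det) :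
    (PhiStar M)⁻¹ = PhiStar M⁻¹ :=
  inv_eq_right_inv <| by rw [← phiStar_mul, mul_nonsing_inv M hM, phiStar_one]

section TraceIdentities

variable {R : Type*} [CommRing R] {M : Matrix (Fin 2) (Fin 2) R}

lemma trace_inv_mul_fin_two (hM : M.det = 1) (N : Matrix (Fin 2) (Fin 2) R) :
    (M⁻¹ * N).trace = M.trace * N.trace - (M * N).trace := by
  rw [inv_def, hM, Ring.inverse_one, one_smul, adjugate_fin_two]
  simp [trace_fin_two, mul_apply, Fin.sum_univ_two, vecMul, dotProduct]
  ring

lemma trace_inv_fin_two (hM : M.det = 1) : M⁻¹.trace = M.trace := by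
  have h := trace_inv_mul_fin_two hM 1
  rw [mul_one, mul_one, trace_one, Fintype.card_fin] at h
  linear_combination h

end TraceIdentities

theorem shape_invariant_of_irreducible_image
    (Ah Bh : Matrix (Fin 2) (Fin 2) ℂ) (hA : Ah.det = 1) (hB : Bh.det = 1) :
    (let A := PhiStar Ah; let B := PhiStar Bh; let C := (B * A)⁻¹;
     (A⁻¹ * B).trace - (A⁻¹).trace * B.trace
       = A.trace + B.trace + C.trace + 1
         - 2 * Ah.trace * Bh.trace * (Ah * Bh).trace) := by
  have hBA : (Bh * Ah).det = 1 := by rw [det_mul, hA, hB, one_mul]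
  intro A B C
  have hAinv : A⁻¹ = PhiStar Ah⁻¹ := inv_phiStar (hA ▸ isUnit_one)
  have hC : C = PhiStar (Bh * Ah)⁻¹ := by
    change (PhiStar Bh * PhiStar Ah)⁻¹ = _
    rw [← phiStar_mul, inv_phiStar (hBA ▸ isUnit_one)]
  simp only [A, B, hAinv, hC, ← phiStar_mul, trace_phiStar, det_mul, det_nonsing_inv,
    hA, hB, hBA, Ring.inverse_one, trace_inv_fin_two hA, trace_inv_fin_two hBA,
    trace_inv_mul_fin_two hA, trace_mul_comm Bh Ah]
  ring
end
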